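/- arXiv:1907.04164 — 6 statements merged into one kernel-verified Lean document; each statement's English description precedes it below -/
import Mathlib

section
/- For momentum SGD on a scalar noisy quadratic, the expected risk at time t satisfies E[ℓ(θ(t))] ≤ ((r₁^{t+1} - r₂^{t+1} - β(r₁^t - r₂^t))/(r₁ - r₂))² E[ℓ(θ(0))] + (1+β)αc / (2B(2β + 2 - αh)(1-β)), where r₁ ≥ r₂ are the roots of x² - (1-αh+β)x + β = 0. -/
/-!
Write `s = 1 - αh + β`. Since `θ (n+1) + α m (n+1) = θ n`, the quantity `θ n + α m n` is the
previous iterate (equal to `θ 0` at `n = 0`, because `m 0 = 0`), and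
`θ (n+1) = s θ n - β (θ n + α m n) - α √(c/B) ε n`. The noise is centred and independent of the
current state, so for every pair `(a, c)` the second moment of `a θ (n+1) + c θ n` is that of
`(s a + c) θ n - β a (θ n + α m n)` plus `α² (c/B) a²`. Hence second moments evolve under the
transpose `S` of the companion matrix of `x² - s x + β`, and unrolling from `(1, 0)` gives
`E θₜ² = (aₜ + cₜ)² E θ₀² + α² (c/B) ∑_{j<t} aⱼ²` with `(aₜ, cₜ) = Sᵗ (1, 0)`.
In terms of the (distinct) roots, `(r₁ - r₂)(aₜ + cₜ) = r₁^(t+1) - r₂^(t+1) - β (r₁ᵗ - r₂ᵗ)`.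
The noise sum is bounded by the Lyapunov function `V (a, c) = (1+β)(a² + c²) + 2 s a c`, which is
nonnegative as `|s| ≤ 1 + β` and drops along `S` by exactly
`(1-β)((1+β)² - s²) a² = (1-β) αh (2 + 2β - αh) a²`.
-/

open MeasureTheory ProbabilityTheory Finset

section Iterate

variable {X M : Type*}

theorem eq_apply_iterate_add_sum_of_succ_eq [AddCommMonoid M] (S : X → X) (g : X → M)
    (F : ℕ → X → M) (hF : ∀ n w, F (n + 1) w = F n (S w) + g w) (t : ℕ) (w : X) :
    F t w = F 0 (S^[t] w) + ∑ j ∈ range t, g (S^[j] w) := by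
  induction t generalizing w with
  | zero => simp
  | succ t ih =>
    simp only [hF, ih, sum_range_succ', Function.iterate_succ_apply,
      Function.iterate_zero_apply]
    abel

theorem sum_range_iterate_le_of_lyapunov [AddCommMonoid M] [PartialOrder M]
    [IsOrderedAddMonoid M] (S : X → X) (g V : X → M) (hV : ∀ w, 0 ≤ V w)
    (hstep : ∀ w, V (S w) + g w ≤ V w) (t : ℕ) (w : X) :
    ∑ j ∈ range t, g (S^[j] w) ≤ V w := by
  induction t generalizing w with
  | zero => simpa using hV w
  | succ t ih =>
    rw [sum_range_succ']
    simp only [Function.iterate_succ_apply, Function.iterate_zero_apply]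
    exact (add_le_add (ih (S w)) le_rfl).trans (hstep w)

end Iterate

def companionTranspose {R : Type*} [CommRing R] (s b : R) (w : R × R) : R × R :=
  (s * w.1 + w.2, -(b * w.1))

theorem sub_mul_companionTranspose_iterate {s b : ℝ} {p q : ℂ} (hs : p + q = (s : ℂ))
    (hb : p * q = (b : ℂ)) (t : ℕ) :
    (p - q) * ((companionTranspose s b)^[t] (1, 0)).1 = p ^ (t + 1) - q ^ (t + 1) ∧
      (p - q) * ((companionTranspose s b)^[t] (1, 0)).2 = -(p * q) * (p ^ t - q ^ t) := by
  induction t with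
  | zero => simp
  | succ t ih =>
    rw [Function.iterate_succ_apply']
    simp only [companionTranspose]
    push_cast
    constructor
    · linear_combination (s : ℂ) * ih.1 + ih.2 - (p ^ (t + 1) - q ^ (t + 1)) * hs
    · linear_combination -(b : ℂ) * ih.1 + (p ^ (t + 1) - q ^ (t + 1)) * hb

theorem companionTranspose_sum_sq_le {s b : ℝ} (hs : |s| ≤ 1 + b) (t : ℕ) :
    (1 - b) * ((1 + b) ^ 2 - s ^ 2) *
        ∑ j ∈ range t, ((companionTranspose s b)^[j] (1, 0)).1 ^ 2 ≤ 1 + b := by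
  rw [mul_sum]
  refine (sum_range_iterate_le_of_lyapunov (companionTranspose s b)
    (fun w => (1 - b) * ((1 + b) ^ 2 - s ^ 2) * w.1 ^ 2)
    (fun w => (1 + b) * (w.1 ^ 2 + w.2 ^ 2) + 2 * s * w.1 * w.2) (fun w => ?_)
    (fun w => le_of_eq ?_) t (1, 0)).trans_eq (by ring)
  · rcases abs_le.mp hs with ⟨hs₁, hs₂⟩
    rcases le_total 0 s with h | h
    · nlinarith [sq_nonneg (w.1 + w.2), sq_nonneg w.1, sq_nonneg w.2]
    · nlinarith [sq_nonneg (w.1 - w.2), sq_nonneg w.1, sq_nonneg w.2]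
  · simp only [companionTranspose]
    ring

theorem momentum_roots_ne {k b : ℝ} (hk : 0 ≤ k) (hb : b < 1) (hbk : b ≠ (1 - √k) ^ 2)
    {p q : ℂ} (hs : p + q = ((1 - k + b : ℝ) : ℂ)) (hpq : p * q = (b : ℂ)) : p ≠ q := by
  rintro rfl
  have hdisc : (1 - k + b) ^ 2 - 4 * b = 0 := by
    have : ((1 - k + b : ℝ) : ℂ) ^ 2 - 4 * (b : ℂ) = 0 := by
      rw [← hs, ← hpq]
      ring
    exact_mod_cast this
  have hfac : ((1 - √k) ^ 2 - b) * ((1 + √k) ^ 2 - b) = 0 := by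
    linear_combination hdisc + (√k ^ 2 + k - 2 - 2 * b) * Real.sq_sqrt hk
  rcases mul_eq_zero.mp hfac with h | h
  · exact hbk (by linarith)
  · nlinarith [Real.sqrt_nonneg k]

theorem momentum_coeff_eq_companionTranspose_iterate {k β : ℝ} (hk : 0 ≤ k) (hβ1 : β < 1)
    (hβk : β ≠ (1 - √k) ^ 2) {r₁ r₂ : ℂ} (hprod : r₁ * r₂ = (β : ℂ))
    (hsum : r₁ + r₂ = ((1 - k + β : ℝ) : ℂ)) (t : ℕ) :
    (r₁ ^ (t + 1) - r₂ ^ (t + 1) - (β : ℂ) * (r₁ ^ t - r₂ ^ t)) / (r₁ - r₂)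
      = ((((companionTranspose (1 - k + β) β)^[t] (1, 0)).1
          + ((companionTranspose (1 - k + β) β)^[t] (1, 0)).2 : ℝ) : ℂ) := by
  have hne : r₁ - r₂ ≠ 0 := sub_ne_zero.mpr (momentum_roots_ne hk hβ1 hβk hsum hprod)
  obtain ⟨h₁, h₂⟩ := sub_mul_companionTranspose_iterate hsum hprod t
  rw [div_eq_iff hne]
  push_cast
  linear_combination -h₁ - h₂ + (r₁ ^ t - r₂ ^ t) * hprod

section Moments

variable {Ω : Type*} [MeasurableSpace Ω] {μ : Measure Ω}

theorem integral_add_mul_sq_of_indepFun {X ε : Ω → ℝ} (hX : MemLp X 2 μ) (hε : MemLp ε 2 μ)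
    (hXε : IndepFun X ε μ) (hmean : ∫ ω, ε ω ∂μ = 0) (τ : ℝ) :
    ∫ ω, (X ω + τ * ε ω) ^ 2 ∂μ = ∫ ω, X ω ^ 2 ∂μ + τ ^ 2 * ∫ ω, ε ω ^ 2 ∂μ := by
  have hcross : ∫ ω, X ω * ε ω ∂μ = 0 := by
    simpa [hmean] using
      hXε.integral_mul_eq_mul_integral hX.aestronglyMeasurable hε.aestronglyMeasurable
  have hXX : Integrable (fun ω => X ω ^ 2) μ := hX.integrable_sq
  have hXε' : Integrable (fun ω => 2 * τ * (X ω * ε ω)) μ :=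
    (hX.integrable_mul hε).const_mul _
  have hεε : Integrable (fun ω => τ ^ 2 * ε ω ^ 2) μ := hε.integrable_sq.const_mul _
  calc ∫ ω, (X ω + τ * ε ω) ^ 2 ∂μ
      = ∫ ω, X ω ^ 2 + 2 * τ * (X ω * ε ω) + τ ^ 2 * ε ω ^ 2 ∂μ := by
        congr with ω; ring
    _ = ∫ ω, X ω ^ 2 ∂μ + τ ^ 2 * ∫ ω, ε ω ^ 2 ∂μ := by
        rw [integral_add (f := fun ω => X ω ^ 2 + 2 * τ * (X ω * ε ω)) (hXX.add hXε') hεε,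
          integral_add hXX hXε', integral_const_mul, integral_const_mul, hcross]
        ring

theorem integral_sq_companion_step {X Y ε : Ω → ℝ} (hX : MemLp X 2 μ) (hY : MemLp Y 2 μ)
    (hε : MemLp ε 2 μ) (hXYε : IndepFun (fun ω => (X ω, Y ω)) ε μ)
    (hmean : ∫ ω, ε ω ∂μ = 0) (s b τ : ℝ) (w : ℝ × ℝ) :
    ∫ ω, (w.1 * (s * X ω - b * Y ω + τ * ε ω) + w.2 * X ω) ^ 2 ∂μ
      = ∫ ω, ((companionTranspose s b w).1 * X ω + (companionTranspose s b w).2 * Y ω) ^ 2 ∂μ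
        + (τ * w.1) ^ 2 * ∫ ω, ε ω ^ 2 ∂μ := by
  set v := companionTranspose s b w
  have hind : IndepFun (fun ω => v.1 * X ω + v.2 * Y ω) ε μ :=
    hXYε.comp (φ := fun z : ℝ × ℝ => v.1 * z.1 + v.2 * z.2) (by fun_prop) measurable_id
  rw [← integral_add_mul_sq_of_indepFun (X := fun ω => v.1 * X ω + v.2 * Y ω)
    ((hX.const_mul v.1).add (hY.const_mul v.2)) hε hind hmean]
  congr with ω
  simp only [v, companionTranspose]
  ring

theorem integral_sq_momentum_eq {θ m ε : ℕ → Ω → ℝ} {α h β σ : ℝ}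
    (hθL2 : ∀ t, MemLp (θ t) 2 μ) (hmL2 : ∀ t, MemLp (m t) 2 μ)
    (hεL2 : ∀ t, MemLp (ε t) 2 μ) (hmean : ∀ t, ∫ ω, ε t ω ∂μ = 0)
    (hsq : ∀ t, ∫ ω, ε t ω ^ 2 ∂μ = 1)
    (hindep : ∀ t, IndepFun (fun ω => (θ t ω, m t ω)) (ε t) μ) (hm0 : ∀ ω, m 0 ω = 0)
    (hrecm : ∀ t ω, m (t + 1) ω = β * m t ω + h * θ t ω + σ * ε t ω)
    (hrecθ : ∀ t ω, θ (t + 1) ω = θ t ω - α * m (t + 1) ω) (t : ℕ) :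
    ∫ ω, θ t ω ^ 2 ∂μ
      = (((companionTranspose (1 - α * h + β) β)^[t] (1, 0)).1
          + ((companionTranspose (1 - α * h + β) β)^[t] (1, 0)).2) ^ 2 * ∫ ω, θ 0 ω ^ 2 ∂μ
        + (α * σ) ^ 2 *
          ∑ j ∈ range t, ((companionTranspose (1 - α * h + β) β)^[j] (1, 0)).1 ^ 2 := by
  set S := companionTranspose (1 - α * h + β) β
  -- `θ n + α * m n` is the previous iterate (`θ 0` when `n = 0`)
  let F : ℕ → ℝ × ℝ → ℝ := fun n w =>
    ∫ ω, (w.1 * θ n ω + w.2 * (θ n ω + α * m n ω)) ^ 2 ∂μ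
  have hF : ∀ n w, F (n + 1) w = F n (S w) + (α * σ) ^ 2 * w.1 ^ 2 := by
    intro n w
    have hθ : ∀ ω, θ (n + 1) ω
        = (1 - α * h + β) * θ n ω - β * (θ n ω + α * m n ω) + -(α * σ) * ε n ω := by
      intro ω; rw [hrecθ, hrecm]; ring
    have hprev : ∀ ω, θ (n + 1) ω + α * m (n + 1) ω = θ n ω := by
      intro ω; rw [hrecθ]; ring
    have hind : IndepFun (fun ω => (θ n ω, θ n ω + α * m n ω)) (ε n) μ :=
      (hindep n).comp (φ := fun z : ℝ × ℝ => (z.1, z.1 + α * z.2))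
      (by fun_prop) measurable_id
    calc F (n + 1) w
        = ∫ ω, (w.1 * ((1 - α * h + β) * θ n ω - β * (θ n ω + α * m n ω)
            + -(α * σ) * ε n ω) + w.2 * θ n ω) ^ 2 ∂μ := by
          simp only [F]
          congr with ω
          rw [hprev ω, hθ ω]
      _ = F n (S w) + (α * σ) ^ 2 * w.1 ^ 2 := by
          rw [integral_sq_companion_step (Y := fun ω => θ n ω + α * m n ω) (hθL2 n)
            ((hθL2 n).add ((hmL2 n).const_mul α))
            (hεL2 n) hind (hmean n), hsq n]
          ring
  have hF0 : ∀ w, F 0 w = (w.1 + w.2) ^ 2 * ∫ ω, θ 0 ω ^ 2 ∂μ := by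
    intro w
    simp only [F, hm0, ← integral_const_mul]
    congr with ω
    ring
  simpa [F, hF0, mul_sum] using eq_apply_iterate_add_sum_of_succ_eq S _ F hF t (1, 0)

end Moments

theorem stmt5_general {Ω : Type*} [MeasurableSpace Ω] {μ : Measure Ω}
    (α h c B β : ℝ) (hα : 0 < α) (hh : 0 < h) (hc : 0 < c) (hB : 0 < B)
    (hβ1 : β < 1) (hβne : β ≠ (1 - Real.sqrt (α * h)) ^ 2)
    (hstable : α * h < 2 * (1 + β))
    (θ m ε : ℕ → Ω → ℝ)
    (hθL2 : ∀ t, MemLp (θ t) 2 μ) (hmL2 : ∀ t, MemLp (m t) 2 μ)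
    (hεL2 : ∀ t, MemLp (ε t) 2 μ)
    (hmean : ∀ t, ∫ ω, ε t ω ∂μ = 0) (hvar : ∀ t, variance (ε t) μ = 1)
    (hindep : ∀ t, IndepFun (fun ω => (θ t ω, m t ω)) (ε t) μ)
    (hm0 : ∀ ω, m 0 ω = 0)
    (hrecm : ∀ t ω, m (t + 1) ω = β * m t ω + h * θ t ω + Real.sqrt (c / B) * ε t ω)
    (hrecθ : ∀ t ω, θ (t + 1) ω = θ t ω - α * m (t + 1) ω)
    (r₁ r₂ : ℂ)
    (hprod : r₁ * r₂ = (β : ℂ)) (hsum : r₁ + r₂ = ((1 - α * h + β : ℝ) : ℂ))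
    (t : ℕ) :
    ∫ ω, (1 / 2) * h * (θ t ω) ^ 2 ∂μ
      ≤ ‖(r₁ ^ (t + 1) - r₂ ^ (t + 1) - (β : ℂ) * (r₁ ^ t - r₂ ^ t))
            / (r₁ - r₂)‖ ^ 2 * ∫ ω, (1 / 2) * h * (θ 0 ω) ^ 2 ∂μ
        + (1 + β) * α * c / (2 * B * (2 * β + 2 - α * h) * (1 - β)) := by
  set S := companionTranspose (1 - α * h + β) β
  set sumSq := ∑ j ∈ range t, (S^[j] (1, 0)).1 ^ 2
  have hαh : 0 < α * h := mul_pos hα hh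
  have h1β : 0 < 1 - β := by linarith
  have hgap : 0 < 2 * β + 2 - α * h := by linarith
  have hsq : ∀ t, ∫ ω, ε t ω ^ 2 ∂μ = 1 := fun t => by
    rw [← variance_of_integral_eq_zero (hεL2 t).aemeasurable (hmean t), hvar t]
  have hnorm : ‖(r₁ ^ (t + 1) - r₂ ^ (t + 1) - (β : ℂ) * (r₁ ^ t - r₂ ^ t)) / (r₁ - r₂)‖ ^ 2
      = ((S^[t] (1, 0)).1 + (S^[t] (1, 0)).2) ^ 2 := by
    rw [momentum_coeff_eq_companionTranspose_iterate hαh.le hβ1 hβne hprod hsum,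
      Complex.norm_real, Real.norm_eq_abs, sq_abs]
  have hsumSq : sumSq ≤ (1 + β) / ((1 - β) * (α * h) * (2 * β + 2 - α * h)) := by
    rw [le_div_iff₀ (by positivity)]
    have hs : |1 - α * h + β| ≤ 1 + β := abs_le.mpr ⟨by linarith, by linarith⟩
    linarith [companionTranspose_sum_sq_le hs t]
  have hnoise : 1 / 2 * h * ((α * √(c / B)) ^ 2 * sumSq)
      ≤ (1 + β) * α * c / (2 * B * (2 * β + 2 - α * h) * (1 - β)) := by
    calc 1 / 2 * h * ((α * √(c / B)) ^ 2 * sumSq)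
        ≤ 1 / 2 * h * ((α * √(c / B)) ^ 2
          * ((1 + β) / ((1 - β) * (α * h) * (2 * β + 2 - α * h)))) := by gcongr
      _ = (1 + β) * α * c / (2 * B * (2 * β + 2 - α * h) * (1 - β)) := by
        rw [mul_pow, Real.sq_sqrt (div_pos hc hB).le]
        field_simp
  rw [integral_const_mul, integral_const_mul,
    integral_sq_momentum_eq hθL2 hmL2 hεL2 hmean hsq hindep hm0 hrecm hrecθ t, hnorm]
  linarith

/-- For momentum SGD on a scalar noisy quadratic (`m(t+1) = βm(t) + hθ(t) + √(c/B)ε(t)`,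
`θ(t+1) = θ(t) - αm(t+1)`, `m(0) = 0`), with `0 ≤ β < 1`, `β ≠ (1-√(αh))²` and
`αh < 2(1+β)`, the expected risk at time `t` satisfies
`E[ℓ(θ(t))] ≤ |(r₁^(t+1) - r₂^(t+1) - β(r₁^t - r₂^t))/(r₁-r₂)|² E[ℓ(θ(0))]
  + (1+β)αc/(2B(2β+2-αh)(1-β))`,
where `r₁, r₂` are the (possibly complex) roots of `x² - (1-αh+β)x + β = 0`. -/
theorem stmt5 {Ω : Type*} [MeasurableSpace Ω] {μ : Measure Ω} [IsProbabilityMeasure μ]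
    (α h c B β : ℝ) (hα : 0 < α) (hh : 0 < h) (hc : 0 < c) (hB : 0 < B)
    (hβ0 : 0 ≤ β) (hβ1 : β < 1) (hβne : β ≠ (1 - Real.sqrt (α * h)) ^ 2)
    (hstable : α * h < 2 * (1 + β))
    (θ m ε : ℕ → Ω → ℝ)
    (hθmeas : ∀ t, Measurable (θ t)) (hmmeas : ∀ t, Measurable (m t))
    (hεmeas : ∀ t, Measurable (ε t))
    (hθL2 : ∀ t, MemLp (θ t) 2 μ) (hmL2 : ∀ t, MemLp (m t) 2 μ)
    (hεL2 : ∀ t, MemLp (ε t) 2 μ)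
    (hmean : ∀ t, ∫ ω, ε t ω ∂μ = 0) (hvar : ∀ t, variance (ε t) μ = 1)
    (hindep : ∀ t, IndepFun (fun ω => (θ t ω, m t ω)) (ε t) μ)
    (hm0 : ∀ ω, m 0 ω = 0)
    (hrecm : ∀ t ω, m (t + 1) ω = β * m t ω + h * θ t ω + Real.sqrt (c / B) * ε t ω)
    (hrecθ : ∀ t ω, θ (t + 1) ω = θ t ω - α * m (t + 1) ω)
    (r₁ r₂ : ℂ)
    (hprod : r₁ * r₂ = (β : ℂ)) (hsum : r₁ + r₂ = ((1 - α * h + β : ℝ) : ℂ))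
    (t : ℕ) :
    ∫ ω, (1 / 2) * h * (θ t ω) ^ 2 ∂μ
      ≤ ‖(r₁ ^ (t + 1) - r₂ ^ (t + 1) - (β : ℂ) * (r₁ ^ t - r₂ ^ t))
            / (r₁ - r₂)‖ ^ 2 * ∫ ω, (1 / 2) * h * (θ 0 ω) ^ 2 ∂μ
        + (1 + β) * α * c / (2 * B * (2 * β + 2 - α * h) * (1 - β)) :=
  stmt5_general α h c B β hα hh hc hB hβ1 hβne hstable θ m ε hθL2 hmL2 hεL2 hmean hvar hindep hm0
    hrecm hrecθ r₁ r₂ hprod hsum t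
end

section
/- If r₁ and r₂ are the roots of x² - (1-αh+β)x + β = 0 with r₁r₂ = β, r₁+r₂ = 1-αh+β, |r₁| < 1, |r₂| < 1, then ∑_{p=0}^∞ (r₁^p - r₂^p)²/(r₁-r₂)² = (1+β) / ((1-β)(2β+2-αh)(αh)) (for r₁ ≠ r₂). -/
/-!
Expanding the square, `((r₁^p - r₂^p)/(r₁ - r₂))²` is a combination of the three geometric
sequences `(r₁²)^p`, `(r₂²)^p` and `(r₁r₂)^p`, which sum to
`(1 + r₁r₂)/((1 - r₁²)(1 - r₂²)(1 - r₁r₂))`. By Vieta, `r₁r₂ = β` and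
`(1 - r₁²)(1 - r₂²) = (1 + r₁r₂)² - (r₁ + r₂)² = αh(2 + 2β - αh)`.
-/

section

variable {K : Type*} [NormedField K]

lemma one_sub_ne_zero_of_norm_lt_one {x : K} (hx : ‖x‖ < 1) : 1 - x ≠ 0 := by
  rw [sub_ne_zero]
  rintro rfl
  simp at hx

theorem hasSum_sq_pow_sub_pow_div_sub {z w : K} (hzw : z ≠ w) (hz : ‖z‖ < 1) (hw : ‖w‖ < 1) :
    HasSum (fun p : ℕ => ((z ^ p - w ^ p) / (z - w)) ^ 2)
      ((1 + z * w) / ((1 - z ^ 2) * (1 - w ^ 2) * (1 - z * w))) := by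
  have hz2 : ‖z ^ 2‖ < 1 := by simpa using pow_lt_one₀ (norm_nonneg z) hz two_ne_zero
  have hw2 : ‖w ^ 2‖ < 1 := by simpa using pow_lt_one₀ (norm_nonneg w) hw two_ne_zero
  have hzw1 : ‖z * w‖ < 1 := by
    rw [norm_mul]
    exact mul_lt_one_of_nonneg_of_lt_one_left (norm_nonneg z) hz hw.le
  have hsub : z - w ≠ 0 := sub_ne_zero.mpr hzw
  have h₁ := one_sub_ne_zero_of_norm_lt_one hz2
  have h₂ := one_sub_ne_zero_of_norm_lt_one hw2
  have h₃ := one_sub_ne_zero_of_norm_lt_one hzw1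
  have H := ((((hasSum_geometric_of_norm_lt_one hz2).add
    (hasSum_geometric_of_norm_lt_one hw2)).sub
    ((hasSum_geometric_of_norm_lt_one hzw1).mul_left 2)).div_const ((z - w) ^ 2))
  convert H using 1
  · ext p
    field_simp
    ring
  · field_simp
    ring

end

theorem stmt6_general (α h β : ℝ)
    (r₁ r₂ : ℂ) (hne : r₁ ≠ r₂)
    (hprod : r₁ * r₂ = (β : ℂ)) (hsum : r₁ + r₂ = ((1 - α * h + β : ℝ) : ℂ))
    (hr₁ : ‖r₁‖ < 1) (hr₂ : ‖r₂‖ < 1) :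
    ∑' p : ℕ, ((r₁ ^ p - r₂ ^ p) / (r₁ - r₂)) ^ 2
      = (((1 + β) / ((1 - β) * (2 * β + 2 - α * h) * (α * h)) : ℝ) : ℂ) := by
  have hden : (1 - r₁ ^ 2) * (1 - r₂ ^ 2) * (1 - r₁ * r₂)
      = (1 - β) * (2 * β + 2 - α * h) * (α * h) :=
    calc (1 - r₁ ^ 2) * (1 - r₂ ^ 2) * (1 - r₁ * r₂)
        = ((1 + r₁ * r₂) ^ 2 - (r₁ + r₂) ^ 2) * (1 - r₁ * r₂) := by ring
      _ = (1 - (β : ℂ)) * (2 * β + 2 - α * h) * (α * h) := by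
        rw [hprod, hsum]
        push_cast
        ring
  rw [(hasSum_sq_pow_sub_pow_div_sub hne hr₁ hr₂).tsum_eq, hden, hprod]
  norm_cast

/-- If `r₁ ≠ r₂` are the (possibly complex) roots of `x² - (1-αh+β)x + β = 0`, both of
modulus `< 1`, then `∑_{p=0}^∞ ((r₁^p - r₂^p)/(r₁-r₂))² = (1+β)/((1-β)(2β+2-αh)(αh))`. -/
theorem stmt6 (α h β : ℝ) (hα : 0 < α) (hh : 0 < h) (hβ0 : 0 ≤ β) (hβ1 : β < 1)
    (hstable : 0 < α * h ∧ α * h < 2 * (1 + β))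
    (r₁ r₂ : ℂ) (hne : r₁ ≠ r₂)
    (hprod : r₁ * r₂ = (β : ℂ)) (hsum : r₁ + r₂ = ((1 - α * h + β : ℝ) : ℂ))
    (hr₁ : ‖r₁‖ < 1) (hr₂ : ‖r₂‖ < 1) :
    ∑' p : ℕ, ((r₁ ^ p - r₂ ^ p) / (r₁ - r₂)) ^ 2
      = (((1 + β) / ((1 - β) * (2 * β + 2 - α * h) * (α * h)) : ℝ) : ℂ) :=
  stmt6_general α h β r₁ r₂ hne hprod hsum hr₁ hr₂
end

section
/- When β = (1-√(αh))², all three eigenvalues of the momentum-SGD transition matrix T equal β. -/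
/-!
With `a = αh`, the characteristic polynomial factors as `-(λ - β) (λ² - (β² - 2aβ + (1 - a)²) λ + β²)`.
Writing `a = s²` and `β = (1 - s)²`, the identity `1 - a = (1 - s)(1 + s)` gives
`β² - 2aβ + (1 - a)² = (1 - s)² ((1 - s)² - 2s² + (1 + s)²) = 2β`,
so the quadratic factor is `(λ - β)²`.
-/

open Matrix

def momentumSGDMatrix {R : Type*} [CommRing R] (a β : R) : Matrix (Fin 3) (Fin 3) R :=
  !![(1 - a) ^ 2, β ^ 2, 2 * (1 - a) * β;
     a ^ 2, β ^ 2, -2 * β * a;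
     -(1 - a) * a, β ^ 2, (1 - 2 * a) * β]

theorem det_momentumSGDMatrix_sub_smul_one {R : Type*} [CommRing R] (a β lam : R) :
    (momentumSGDMatrix a β - lam • (1 : Matrix (Fin 3) (Fin 3) R)).det =
      -(lam - β) * (lam ^ 2 - (β ^ 2 - 2 * a * β + (1 - a) ^ 2) * lam + β ^ 2) := by
  simp only [momentumSGDMatrix, det_fin_three, Matrix.sub_apply, Matrix.smul_apply, of_apply,
    cons_val', cons_val_zero, cons_val_one, cons_val, cons_val_fin_one, one_apply, smul_eq_mul,
    Fin.reduceEq, ↓reduceIte]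
  ring

theorem momentum_quadratic_eq_sq {R : Type*} [CommRing R] {a s β : R}
    (ha : a = s ^ 2) (hβ : β = (1 - s) ^ 2) (lam : R) :
    lam ^ 2 - (β ^ 2 - 2 * a * β + (1 - a) ^ 2) * lam + β ^ 2 = (lam - β) ^ 2 := by
  subst ha hβ
  ring

theorem stmt11_general (α h : ℝ) (h0 : 0 < α * h)
    (β : ℝ) (hβ : β = (1 - Real.sqrt (α * h)) ^ 2) :
    ∀ lam : ℝ,
      (Matrix.det
        (!![(1 - α * h) ^ 2, β ^ 2, 2 * (1 - α * h) * β;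
            (α * h) ^ 2, β ^ 2, -2 * β * (α * h);
            -(1 - α * h) * (α * h), β ^ 2, (1 - 2 * α * h) * β]
          - lam • (1 : Matrix (Fin 3) (Fin 3) ℝ)))
      = -(lam - β) ^ 3 := by
  intro lam
  have ha : α * h = Real.sqrt (α * h) ^ 2 := (Real.sq_sqrt h0.le).symm
  rw [mul_assoc 2 α h]
  change (momentumSGDMatrix (α * h) β - _).det = _
  rw [det_momentumSGDMatrix_sub_smul_one, momentum_quadratic_eq_sq ha hβ]
  ring

/-- When `β = (1-√(αh))²` (with `0 < αh < 1`), all three eigenvalues of the momentum-SGD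
transition matrix `T` equal `β`: its characteristic polynomial is `-(λ-β)³`. -/
theorem stmt11 (α h : ℝ) (h0 : 0 < α * h) (h1 : α * h < 1)
    (β : ℝ) (hβ : β = (1 - Real.sqrt (α * h)) ^ 2) :
    ∀ lam : ℝ,
      (Matrix.det
        (!![(1 - α * h) ^ 2, β ^ 2, 2 * (1 - α * h) * β;
            (α * h) ^ 2, β ^ 2, -2 * β * (α * h);
            -(1 - α * h) * (α * h), β ^ 2, (1 - 2 * α * h) * β]
          - lam • (1 : Matrix (Fin 3) (Fin 3) ℝ)))
      = -(lam - β) ^ 3 :=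
  stmt11_general α h h0 β hβ
end

section
/- For r₁ = 1-αh and r₂ = γ with 0 < αh < 2 and 0 ≤ γ < 1, the sum ∑_{p=0}^∞ ((r₁^p - r₂^p)/(r₁-r₂))² · α²c/B equals αc(1+(1-αh)γ) / (Bh(2-αh)(1-γ²)(1-(1-αh)γ)) (assuming r₁ ≠ r₂ and |r₁| < 1). -/
/-!
Expanding the square, `((x ^ p - y ^ p) / (x - y)) ^ 2` is a combination of the three geometric
sequences `(x ^ 2) ^ p`, `(y ^ 2) ^ p` and `(x * y) ^ p`, so the series is summed term by term.
With `x = 1 - α h` the factor `1 - x ^ 2 = α h (2 - α h)` cancels one `α` of `α ^ 2 c / B`.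
-/

section GeometricDifferenceQuotient

variable {K : Type*} [NormedField K]

lemma one_sub_ne_zero_of_norm_lt_one_s14 {z : K} (hz : ‖z‖ < 1) : 1 - z ≠ 0 :=
  sub_ne_zero.2 fun h ↦ by simp [← h] at hz

lemma sq_pow_sub_pow_div_sub (x y : K) (p : ℕ) :
    ((x ^ p - y ^ p) / (x - y)) ^ 2 = ((x ^ 2) ^ p + (y ^ 2) ^ p - 2 * (x * y) ^ p) / (x - y) ^ 2 := by
  rw [div_pow, ← pow_mul, ← pow_mul, mul_comm 2 p, pow_mul, pow_mul, mul_pow]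
  ring

lemma inv_add_inv_sub_two_mul_inv_div_sq {x y : K} (hxy : x ≠ y) (hx : 1 - x ^ 2 ≠ 0)
    (hy : 1 - y ^ 2 ≠ 0) (hxy' : 1 - x * y ≠ 0) :
    ((1 - x ^ 2)⁻¹ + (1 - y ^ 2)⁻¹ - 2 * (1 - x * y)⁻¹) / (x - y) ^ 2
      = (1 + x * y) / ((1 - x ^ 2) * (1 - y ^ 2) * (1 - x * y)) := by
  have := sub_ne_zero.2 hxy
  field_simp
  ring

theorem hasSum_sq_pow_sub_pow_div_sub_s14 {x y : K} (hx : ‖x‖ < 1) (hy : ‖y‖ < 1) (hxy : x ≠ y) :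
    HasSum (fun p : ℕ ↦ ((x ^ p - y ^ p) / (x - y)) ^ 2)
      ((1 + x * y) / ((1 - x ^ 2) * (1 - y ^ 2) * (1 - x * y))) := by
  have hx2 : ‖x ^ 2‖ < 1 := by rw [norm_pow]; exact pow_lt_one₀ (norm_nonneg x) hx two_ne_zero
  have hy2 : ‖y ^ 2‖ < 1 := by rw [norm_pow]; exact pow_lt_one₀ (norm_nonneg y) hy two_ne_zero
  have hxy2 : ‖x * y‖ < 1 := by
    rw [norm_mul]; exact mul_lt_one_of_nonneg_of_lt_one_left (norm_nonneg x) hx hy.le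
  rw [← inv_add_inv_sub_two_mul_inv_div_sq hxy (one_sub_ne_zero_of_norm_lt_one_s14 hx2)
    (one_sub_ne_zero_of_norm_lt_one_s14 hy2) (one_sub_ne_zero_of_norm_lt_one_s14 hxy2)]
  simp_rw [sq_pow_sub_pow_div_sub]
  exact (((hasSum_geometric_of_norm_lt_one hx2).add (hasSum_geometric_of_norm_lt_one hy2)).sub
    ((hasSum_geometric_of_norm_lt_one hxy2).mul_left 2)).div_const _

end GeometricDifferenceQuotient

theorem stmt14_general (α h c B γ : ℝ) (hα : 0 < α) (hγ0 : 0 ≤ γ) (hγ1 : γ < 1)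
    (hne : γ ≠ 1 - α * h) (habs : |1 - α * h| < 1) :
    ∑' p : ℕ, (((1 - α * h) ^ p - γ ^ p) / ((1 - α * h) - γ)) ^ 2 * (α ^ 2 * c / B)
      = α * c * (1 + (1 - α * h) * γ)
        / (B * h * (2 - α * h) * (1 - γ ^ 2) * (1 - (1 - α * h) * γ)) := by
  have hγ : ‖γ‖ < 1 := abs_lt.2 ⟨by linarith, hγ1⟩
  rw [((hasSum_sq_pow_sub_pow_div_sub_s14 habs hγ hne.symm).mul_right _).tsum_eq]
  have hfactor : (1 : ℝ) - (1 - α * h) ^ 2 = α * (h * (2 - α * h)) := by ring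
  rw [hfactor]
  field_simp

/-- For `r₁ = 1-αh` and `r₂ = γ` with `0 < αh < 2`, `0 ≤ γ < 1`, `γ ≠ 1-αh` and
`|1-αh| < 1`, the sum `∑_{p=0}^∞ ((r₁^p - r₂^p)/(r₁-r₂))² · α²c/B` equals
`αc(1+(1-αh)γ)/(Bh(2-αh)(1-γ²)(1-(1-αh)γ))`. -/
theorem stmt14 (α h c B γ : ℝ) (hα : 0 < α) (hh : 0 < h) (hc : 0 < c) (hB : 0 < B)
    (h0 : 0 < α * h) (h2 : α * h < 2) (hγ0 : 0 ≤ γ) (hγ1 : γ < 1)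
    (hne : γ ≠ 1 - α * h) (habs : |1 - α * h| < 1) :
    ∑' p : ℕ, (((1 - α * h) ^ p - γ ^ p) / ((1 - α * h) - γ)) ^ 2 * (α ^ 2 * c / B)
      = α * c * (1 + (1 - α * h) * γ)
        / (B * h * (2 - α * h) * (1 - γ ^ 2) * (1 - (1 - α * h) * γ)) :=
  stmt14_general α h c B γ hα hγ0 hγ1 hne habs
end

section
/- In the overdamped regime β < (1-√(αh))² with 0 < αh < 1, the larger root r₁ = (1-αh+β+√((1-β)² - 2(1+β)αh + α²h²))/2 of x² - (1-αh+β)x + β is real and satisfies r₁ ≥ 1 - αh/(1-β) - O(α²h²); more precisely, |r₁ - (1 - αh/(1-β))| ≤ C · (αh)²/(1-β)³ for some absolute constant C, when αh is sufficiently small relative to (1-β)². -/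
/-!
With `s = 1 - β` and `t = αh`, the discriminant is a perturbed square:
`(1-β)² - 2(1+β)t + t² = A² - e` with `A = s + t - 2t/s` and `e = 4βt²/s²`.
Since `r₁ - (1 - t/s) = (√(A² - e) - A)/2` and `A - √(A² - e) = e/(A + √(A² - e)) ≤ e/A`,
the error is at most `e/(2A)`; for `t ≤ s²/4` we have `A ≥ s/2`, so it is at most `4t²/s³`.
-/

lemma quadratic_eq_zero_of_sq_eq_discrim {b c u : ℝ} (hu : u ^ 2 = b ^ 2 - 4 * c) :
    ((b + u) / 2) ^ 2 - b * ((b + u) / 2) + c = 0 := by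
  linear_combination hu / 4

lemma sub_sqrt_sq_sub_le {A e : ℝ} (hA : 0 < A) (he : 0 ≤ e) (heA : e ≤ A ^ 2) :
    0 ≤ A - √(A ^ 2 - e) ∧ A - √(A ^ 2 - e) ≤ e / A := by
  have hu : 0 ≤ √(A ^ 2 - e) := Real.sqrt_nonneg _
  have hu2 : √(A ^ 2 - e) ^ 2 = A ^ 2 - e := Real.sq_sqrt (sub_nonneg.2 heA)
  have hle : √(A ^ 2 - e) ≤ A := by
    calc √(A ^ 2 - e) ≤ √(A ^ 2) := Real.sqrt_le_sqrt (by linarith)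
      _ = A := Real.sqrt_sq hA.le
  refine ⟨sub_nonneg.2 hle, (le_div_iff₀ hA).2 ?_⟩
  nlinarith

section OverdampedRoot

variable {β t : ℝ}

lemma discrim_eq_center_sq_sub_correction (hβ : β < 1) :
    (1 - β) ^ 2 - 2 * (1 + β) * t + t ^ 2
      = (1 - β + t - 2 * t / (1 - β)) ^ 2 - 4 * β * t ^ 2 / (1 - β) ^ 2 := by
  have : 1 - β ≠ 0 := by linarith
  field_simp
  ring

lemma half_le_discrim_center (hβ : β < 1) (ht : 0 ≤ t) (hts : t ≤ (1 - β) ^ 2 / 4) :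
    (1 - β) / 2 ≤ 1 - β + t - 2 * t / (1 - β) := by
  have hs : 0 < 1 - β := by linarith
  have : 2 * t / (1 - β) ≤ (1 - β) / 2 := by
    rw [div_le_div_iff₀ hs two_pos]
    nlinarith
  linarith

lemma discrim_correction_le (hβ1 : β < 1) (ht : 0 ≤ t) (hts : t ≤ (1 - β) ^ 2 / 4) :
    4 * β * t ^ 2 / (1 - β) ^ 2 ≤ ((1 - β) / 2) ^ 2 := by
  have hs : 0 < 1 - β := by linarith
  rw [div_le_iff₀ (by positivity)]
  have : t ^ 2 ≤ ((1 - β) ^ 2 / 4) ^ 2 := pow_le_pow_left₀ ht hts 2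
  nlinarith [pow_pos hs 4]

lemma discrim_nonneg (hβ1 : β < 1) (ht : 0 ≤ t) (hts : t ≤ (1 - β) ^ 2 / 4) :
    0 ≤ (1 - β) ^ 2 - 2 * (1 + β) * t + t ^ 2 := by
  rw [discrim_eq_center_sq_sub_correction hβ1]
  have hA := half_le_discrim_center hβ1 ht hts
  have := pow_le_pow_left₀ (by linarith) hA 2
  linarith [discrim_correction_le hβ1 ht hts]

lemma abs_larger_root_sub_le (hβ0 : 0 ≤ β) (hβ1 : β < 1) (ht : 0 ≤ t)
    (hts : t ≤ (1 - β) ^ 2 / 4) :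
    |(1 - t + β + √((1 - β) ^ 2 - 2 * (1 + β) * t + t ^ 2)) / 2 - (1 - t / (1 - β))|
      ≤ 4 * t ^ 2 / (1 - β) ^ 3 := by
  have hs : 0 < 1 - β := by linarith
  set A := 1 - β + t - 2 * t / (1 - β) with hA_def
  set e := 4 * β * t ^ 2 / (1 - β) ^ 2 with he_def
  have hA : (1 - β) / 2 ≤ A := half_le_discrim_center hβ1 ht hts
  have he : 0 ≤ e := by positivity
  have heA : e ≤ A ^ 2 :=
    (discrim_correction_le hβ1 ht hts).trans (pow_le_pow_left₀ (by linarith) hA 2)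
  obtain ⟨hlow, hup⟩ := sub_sqrt_sq_sub_le (by linarith) he heA
  have hshift :
      (1 - t + β + √(A ^ 2 - e)) / 2 - (1 - t / (1 - β)) = -((A - √(A ^ 2 - e)) / 2) := by
    rw [hA_def]
    field_simp
    ring
  have hbound : e / A ≤ 2 * (4 * t ^ 2 / (1 - β) ^ 3) := by
    calc e / A ≤ e / ((1 - β) / 2) := div_le_div_of_nonneg_left he (by positivity) hA
      _ ≤ 2 * (4 * t ^ 2 / (1 - β) ^ 3) := by
        rw [← mul_div_assoc, he_def, div_div, div_le_div_iff₀ (by positivity) (by positivity)]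
        nlinarith [pow_pos hs 5, sq_nonneg t]
  rw [discrim_eq_center_sq_sub_correction hβ1, hshift, abs_neg, abs_of_nonneg (by linarith)]
  linarith

end OverdampedRoot

/-- In the overdamped regime `β < (1-√(αh))²` with `0 < αh < 1`, the larger root
`r₁ = (1-αh+β+√((1-β)² - 2(1+β)αh + (αh)²))/2` of `x² - (1-αh+β)x + β` is a real root of
the quadratic and satisfies `|r₁ - (1 - αh/(1-β))| ≤ C·(αh)²/(1-β)³` for some absolute
constant `C`, whenever `αh` is sufficiently small relative to `(1-β)²`. -/
theorem stmt15 :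
    ∃ C : ℝ, 0 < C ∧ ∃ δ : ℝ, 0 < δ ∧
      ∀ α h β : ℝ, 0 < α → 0 < h → 0 ≤ β → α * h < 1 →
        β < (1 - Real.sqrt (α * h)) ^ 2 →
        α * h ≤ δ * (1 - β) ^ 2 →
        ∀ r₁ : ℝ,
          r₁ = (1 - α * h + β
            + Real.sqrt ((1 - β) ^ 2 - 2 * (1 + β) * (α * h) + (α * h) ^ 2)) / 2 →
          r₁ ^ 2 - (1 - α * h + β) * r₁ + β = 0 ∧
          |r₁ - (1 - α * h / (1 - β))| ≤ C * (α * h) ^ 2 / (1 - β) ^ 3 := by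
  refine ⟨4, four_pos, 1 / 4, by norm_num, ?_⟩
  intro α h β hα hh hβ0 ht1 hover hsmall r₁ hr₁
  have ht : 0 ≤ α * h := (mul_pos hα hh).le
  have hβ1 : β < 1 := by
    have := Real.sqrt_le_one.2 ht1.le
    nlinarith [Real.sqrt_nonneg (α * h)]
  have hts : α * h ≤ (1 - β) ^ 2 / 4 := by linarith
  subst hr₁
  refine ⟨?_, by simpa only [mul_div_assoc] using abs_larger_root_sub_le hβ0 hβ1 ht hts⟩
  have hD := Real.sq_sqrt (discrim_nonneg hβ1 ht hts)
  linear_combination quadratic_eq_zero_of_sq_eq_discrim (b := 1 - α * h + β) (c := β)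
    (u := √((1 - β) ^ 2 - 2 * (1 + β) * (α * h) + (α * h) ^ 2)) (by rw [hD]; ring)
end

section
/- For preconditioned SGD with preconditioner P = H^p (0 ≤ p ≤ 1) on a d-dimensional noisy quadratic with diagonal Hessian H = diag(h₁,...,h_d) and codiagonal noise covariance C = diag(c₁,...,c_d), the expected total risk satisfies E[L(θ(t))] ≤ ∑ᵢ (1 - αhᵢ^{1-p})^{2t} E[ℓ(θᵢ(0))] + ∑ᵢ αcᵢhᵢ^{-p} / (2B(2 - αhᵢ^{1-p})), provided αhᵢ^{1-p} < 2 for all i. -/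
/-!
The preconditioned update acts coordinatewise as scalar SGD with curvature `hᵢ^(1-p)` and
step noise `α hᵢ^(-p) εᵢ / √B`. Since the iterate is independent of the fresh mean-zero noise,
the cross term vanishes and the second moment obeys the affine recursion
`m (n+1) = (1 - α hᵢ^(1-p))² m n + α² hᵢ^(-2p) cᵢ / B`, whose contraction factor is `< 1`
exactly under the stability condition; unrolling it gives the geometric decay plus the
fixed point of the recursion, and summing over coordinates gives the bound on the risk.
-/

open MeasureTheory ProbabilityTheory

lemma le_pow_mul_add_div_one_sub_of_le_mul_add {a : ℕ → ℝ} {q b : ℝ} (hq0 : 0 ≤ q)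
    (hq1 : q < 1) (hb : 0 ≤ b) (ha : ∀ n, a (n + 1) ≤ q * a n + b) (t : ℕ) :
    a t ≤ q ^ t * a 0 + b / (1 - q) := by
  have hfix : q * (b / (1 - q)) + b = b / (1 - q) := by
    field_simp [(sub_pos.2 hq1).ne']
    ring
  induction t with
  | zero => simpa using div_nonneg hb (sub_pos.2 hq1).le
  | succ n ih =>
    calc a (n + 1) ≤ q * a n + b := ha n
      _ ≤ q * (q ^ n * a 0 + b / (1 - q)) + b := by gcongr
      _ = q ^ (n + 1) * a 0 + (q * (b / (1 - q)) + b) := by ring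
      _ = q ^ (n + 1) * a 0 + b / (1 - q) := by rw [hfix]

section SecondMoment

variable {Ω : Type*} [MeasurableSpace Ω] {μ : Measure Ω} [IsProbabilityMeasure μ]

lemma integral_sq_sub_of_indepFun {X E : Ω → ℝ} (hX : MemLp X 2 μ) (hE : MemLp E 2 μ)
    (hindep : IndepFun X E μ) (hmean : ∫ ω, E ω ∂μ = 0) (r s : ℝ) :
    ∫ ω, (r * X ω - s * E ω) ^ 2 ∂μ
      = r ^ 2 * ∫ ω, X ω ^ 2 ∂μ + s ^ 2 * ∫ ω, E ω ^ 2 ∂μ := by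
  have hXE : Integrable (fun ω => X ω * E ω) μ :=
    hindep.integrable_mul (hX.integrable one_le_two) (hE.integrable one_le_two)
  have hcross : ∫ ω, X ω * E ω ∂μ = 0 := by
    have := hindep.integral_mul_eq_mul_integral hX.aestronglyMeasurable hE.aestronglyMeasurable
    simpa [Pi.mul_def, hmean] using this
  have hexpand : (fun ω => (r * X ω - s * E ω) ^ 2)
      = fun ω => r ^ 2 * X ω ^ 2 - 2 * r * s * (X ω * E ω) + s ^ 2 * E ω ^ 2 := by
    ext ω
    ring
  have hdiff : Integrable (fun ω => r ^ 2 * X ω ^ 2 - 2 * r * s * (X ω * E ω)) μ :=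
    (hX.integrable_sq.const_mul _).sub (hXE.const_mul _)
  rw [hexpand, integral_add hdiff (hE.integrable_sq.const_mul _),
    integral_sub (hX.integrable_sq.const_mul _) (hXE.const_mul _),
    integral_const_mul, integral_const_mul, integral_const_mul, hcross]
  ring

lemma integral_sq_le_of_linear_recurrence {X E : ℕ → Ω → ℝ} {r s v : ℝ} (hr : r ^ 2 < 1)
    (hv : 0 ≤ v)
    (hX : ∀ n, MemLp (X n) 2 μ) (hE : ∀ n, MemLp (E n) 2 μ)
    (hindep : ∀ n, IndepFun (X n) (E n) μ) (hmean : ∀ n, ∫ ω, E n ω ∂μ = 0)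
    (hvar : ∀ n, ∫ ω, E n ω ^ 2 ∂μ = v)
    (hrec : ∀ n ω, X (n + 1) ω = r * X n ω - s * E n ω) (t : ℕ) :
    ∫ ω, X t ω ^ 2 ∂μ ≤ (r ^ 2) ^ t * ∫ ω, X 0 ω ^ 2 ∂μ + s ^ 2 * v / (1 - r ^ 2) := by
  refine le_pow_mul_add_div_one_sub_of_le_mul_add (a := fun n => ∫ ω, X n ω ^ 2 ∂μ)
    (sq_nonneg r) hr (mul_nonneg (sq_nonneg s) hv) (fun n => le_of_eq ?_) t
  simp only [hrec n]
  rw [integral_sq_sub_of_indepFun (hX n) (hE n) (hindep n) (hmean n), hvar n]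

lemma integral_half_mul_sq_le_of_preconditioned_sgd {X E : ℕ → Ω → ℝ} {α B p h v : ℝ}
    (hα : 0 < α) (hB : 0 < B) (hh : 0 < h) (hv : 0 ≤ v) (hstable : α * h ^ (1 - p) < 2)
    (hX : ∀ n, MemLp (X n) 2 μ) (hE : ∀ n, MemLp (E n) 2 μ)
    (hindep : ∀ n, IndepFun (X n) (E n) μ) (hmean : ∀ n, ∫ ω, E n ω ∂μ = 0)
    (hvar : ∀ n, ∫ ω, E n ω ^ 2 ∂μ = v)
    (hrec : ∀ n ω, X (n + 1) ω = X n ω - α * h ^ (-p) * (h * X n ω + E n ω / Real.sqrt B))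
    (t : ℕ) :
    ∫ ω, 1 / 2 * h * X t ω ^ 2 ∂μ
      ≤ (1 - α * h ^ (1 - p)) ^ (2 * t) * ∫ ω, 1 / 2 * h * X 0 ω ^ 2 ∂μ
        + α * v * h ^ (-p) / (2 * B * (2 - α * h ^ (1 - p))) := by
  set g := h ^ (1 - p)
  have hg : 0 < g := Real.rpow_pos_of_pos hh _
  have hneg : h ^ (-p) = g / h := by
    rw [← Real.rpow_sub_one hh.ne']
    ring_nf
  have hsqrtB : Real.sqrt B ≠ 0 := (Real.sqrt_pos.2 hB).ne'
  have hrec' : ∀ n ω, X (n + 1) ω = (1 - α * g) * X n ω - α * (g / h) / Real.sqrt B * E n ω := by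
    intro n ω
    rw [hrec n ω, hneg]
    field_simp
    ring
  have hcontract : (1 - α * g) ^ 2 < 1 := by nlinarith [mul_pos hα hg]
  have hfix : 1 / 2 * h * ((α * (g / h) / Real.sqrt B) ^ 2 * v / (1 - (1 - α * g) ^ 2))
      = α * v * (g / h) / (2 * B * (2 - α * g)) := by
    have h2 : 0 < 2 - α * g := by linarith
    rw [div_pow, Real.sq_sqrt hB.le, show 1 - (1 - α * g) ^ 2 = α * g * (2 - α * g) by ring]
    field_simp
  simp only [integral_const_mul]
  rw [hneg, ← hfix, pow_mul]
  calc 1 / 2 * h * ∫ ω, X t ω ^ 2 ∂μ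
      ≤ 1 / 2 * h * (((1 - α * g) ^ 2) ^ t * ∫ ω, X 0 ω ^ 2 ∂μ
          + (α * (g / h) / Real.sqrt B) ^ 2 * v / (1 - (1 - α * g) ^ 2)) := by
        gcongr
        exact integral_sq_le_of_linear_recurrence hcontract hv hX hE hindep hmean hvar hrec' t
    _ = _ := by ring

end SecondMoment

theorem stmt16_general {Ω : Type*} [MeasurableSpace Ω] {μ : Measure Ω} [IsProbabilityMeasure μ]
    (d : ℕ) (α B p : ℝ) (hα : 0 < α) (hB : 0 < B)
    (h c : Fin d → ℝ) (hh : ∀ i, 0 < h i) (hc : ∀ i, 0 ≤ c i)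
    (hstable : ∀ i, α * (h i) ^ (1 - p) < 2)
    (θ ε : ℕ → Ω → Fin d → ℝ)
    (hθL2 : ∀ t i, MemLp (fun ω => θ t ω i) 2 μ)
    (hεL2 : ∀ t i, MemLp (fun ω => ε t ω i) 2 μ)
    (hmean : ∀ t i, ∫ ω, ε t ω i ∂μ = 0)
    (hvar : ∀ t i, ∫ ω, (ε t ω i) ^ 2 ∂μ = c i)
    (hindep : ∀ t i, IndepFun (fun ω => θ t ω i) (fun ω => ε t ω i) μ)
    (hrec : ∀ t ω i, θ (t + 1) ω i
      = θ t ω i - α * (h i) ^ (-p) * (h i * θ t ω i + ε t ω i / Real.sqrt B))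
    (t : ℕ) :
    ∫ ω, ∑ i, (1 / 2) * h i * (θ t ω i) ^ 2 ∂μ
      ≤ (∑ i, (1 - α * (h i) ^ (1 - p)) ^ (2 * t)
            * ∫ ω, (1 / 2) * h i * (θ 0 ω i) ^ 2 ∂μ)
        + ∑ i, α * c i * (h i) ^ (-p) / (2 * B * (2 - α * (h i) ^ (1 - p))) := by
  rw [integral_finsetSum _ fun i _ => (hθL2 t i).integrable_sq.const_mul _,
    ← Finset.sum_add_distrib]
  exact Finset.sum_le_sum fun i _ =>
    integral_half_mul_sq_le_of_preconditioned_sgd (X := fun n ω => θ n ω i)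
      (E := fun n ω => ε n ω i) hα hB (hh i) (hc i) (hstable i) (hθL2 · i) (hεL2 · i)
      (hindep · i) (hmean · i) (hvar · i) (fun n ω => hrec n ω i) t

/-- For preconditioned SGD with preconditioner `P = H^p` (`0 ≤ p ≤ 1`) on a
`d`-dimensional noisy quadratic with diagonal Hessian `H = diag(h₁,...,h_d)` and
codiagonal noise covariance `C = diag(c₁,...,c_d)`, provided `αhᵢ^(1-p) < 2` for all `i`,
the expected total risk satisfies
`E[L(θ(t))] ≤ ∑ᵢ (1 - αhᵢ^(1-p))^(2t) E[ℓ(θᵢ(0))] + ∑ᵢ αcᵢhᵢ^(-p)/(2B(2 - αhᵢ^(1-p)))`. -/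
theorem stmt16 {Ω : Type*} [MeasurableSpace Ω] {μ : Measure Ω} [IsProbabilityMeasure μ]
    (d : ℕ) (α B p : ℝ) (hα : 0 < α) (hB : 0 < B) (hp0 : 0 ≤ p) (hp1 : p ≤ 1)
    (h c : Fin d → ℝ) (hh : ∀ i, 0 < h i) (hc : ∀ i, 0 ≤ c i)
    (hstable : ∀ i, α * (h i) ^ (1 - p) < 2)
    (θ ε : ℕ → Ω → Fin d → ℝ)
    (hθmeas : ∀ t i, Measurable (fun ω => θ t ω i))
    (hεmeas : ∀ t i, Measurable (fun ω => ε t ω i))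
    (hθL2 : ∀ t i, MemLp (fun ω => θ t ω i) 2 μ)
    (hεL2 : ∀ t i, MemLp (fun ω => ε t ω i) 2 μ)
    (hmean : ∀ t i, ∫ ω, ε t ω i ∂μ = 0)
    (hvar : ∀ t i, ∫ ω, (ε t ω i) ^ 2 ∂μ = c i)
    (hindep : ∀ t i, IndepFun (fun ω => θ t ω i) (fun ω => ε t ω i) μ)
    (hrec : ∀ t ω i, θ (t + 1) ω i
      = θ t ω i - α * (h i) ^ (-p) * (h i * θ t ω i + ε t ω i / Real.sqrt B))
    (t : ℕ) :
    ∫ ω, ∑ i, (1 / 2) * h i * (θ t ω i) ^ 2 ∂μ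
      ≤ (∑ i, (1 - α * (h i) ^ (1 - p)) ^ (2 * t)
            * ∫ ω, (1 / 2) * h i * (θ 0 ω i) ^ 2 ∂μ)
        + ∑ i, α * c i * (h i) ^ (-p) / (2 * B * (2 - α * (h i) ^ (1 - p))) :=
  stmt16_general d α B p hα hB h c hh hc hstable θ ε hθL2 hεL2 hmean hvar hindep hrec t
end
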